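/- Let K be a field of characteristic 0 and let t ∈ K satisfy t² = 6t + 18. Then the Weierstrass curves C_{9,1}(t,1), C_{9,2}(t,1), C_{9,3}(t,1) all have nonzero discriminant, the j-invariant of C_{9,2}(t,1) equals 1728, and the j-invariants of C_{9,1}(t,1) and C_{9,3}(t,1) are both equal to 14776832·t + 32440512. -/

import Mathlib

/-!
Modulo `t² = 6t + 18` every coefficient of the three curves reduces to a linear form `a + bt`, and
such a form vanishes only if its norm `a² + 6ab − 18b²` does, which for the forms at hand is a
nonzero rational. The coefficient `a₆` of `C_{9,2}(t,1)` has the factor `t² − 6t − 18`, so it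
vanishes and `j = 1728`. The curve `C_{9,3}(t,1)` coincides with the quadratic twist
`C_{9,1}(t,−9)`, so it has the same `j`-invariant as `C_{9,1}(t,1)`.
-/

noncomputable section

/-- The curve `C_{9,1}(t,d)`. -/
def C91 {K : Type*} [Field K] (t d : K) : WeierstrassCurve K :=
  { a₁ := 0, a₂ := 0, a₃ := 0,
    a₄ := -3 * d ^ 2 * (t + 6) * (t ^ 3 + 234 * t ^ 2 + 756 * t + 2160),
    a₆ := -2 * d ^ 3 * (t ^ 6 - 504 * t ^ 5 - 16632 * t ^ 4 - 123012 * t ^ 3 - 517104 * t ^ 2 - 1143072 * t - 1475496) }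

/-- The curve `C_{9,2}(t,d)`. -/
def C92 {K : Type*} [Field K] (t d : K) : WeierstrassCurve K :=
  { a₁ := 0, a₂ := 0, a₃ := 0,
    a₄ := -243 * d ^ 2 * t * (t + 6) * (t ^ 2 - 6 * t + 36),
    a₆ := -1458 * d ^ 3 * (t ^ 2 - 6 * t - 18) * (t ^ 4 + 6 * t ^ 3 + 54 * t ^ 2 - 108 * t + 324) }

/-- The curve `C_{9,3}(t,d)`. -/
def C93 {K : Type*} [Field K] (t d : K) : WeierstrassCurve K :=
  { a₁ := 0, a₂ := 0, a₃ := 0,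
    a₄ := -19683 * d ^ 2 * t * (t ^ 3 - 24),
    a₆ := -1062882 * d ^ 3 * (t ^ 6 - 36 * t ^ 3 + 216) }

theorem add_mul_ne_zero_of_sq_eq {R : Type*} [CommRing R] {t p q a b : R}
    (ht : t ^ 2 = p * t + q) (hN : a ^ 2 + p * a * b - q * b ^ 2 ≠ 0) : a + b * t ≠ 0 := by
  intro h
  apply hN
  linear_combination (a + b * (p - t)) * h + b ^ 2 * ht

namespace WeierstrassCurve

section Twist

variable {R : Type*} [CommRing R] {W W' : WeierstrassCurve R} [W.IsShortNF] [W'.IsShortNF]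
  {d : R}

theorem c₄_eq_of_twist (h₄ : W'.a₄ = d ^ 2 * W.a₄) : W'.c₄ = d ^ 2 * W.c₄ := by
  rw [c₄_of_isShortNF, c₄_of_isShortNF, h₄]
  ring

theorem Δ_eq_of_twist (h₄ : W'.a₄ = d ^ 2 * W.a₄) (h₆ : W'.a₆ = d ^ 3 * W.a₆) :
    W'.Δ = d ^ 6 * W.Δ := by
  rw [Δ_of_isShortNF, Δ_of_isShortNF, h₄, h₆]
  ring

end Twist

theorem c₄_pow_three_div_Δ_eq_of_twist {K : Type*} [Field K] {W W' : WeierstrassCurve K}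
    [W.IsShortNF] [W'.IsShortNF] {d : K} (hd : d ≠ 0) (h₄ : W'.a₄ = d ^ 2 * W.a₄)
    (h₆ : W'.a₆ = d ^ 3 * W.a₆) : W'.c₄ ^ 3 / W'.Δ = W.c₄ ^ 3 / W.Δ := by
  rw [c₄_eq_of_twist h₄, Δ_eq_of_twist h₄ h₆, mul_pow, ← pow_mul]
  exact mul_div_mul_left _ _ (pow_ne_zero 6 hd)

theorem c₄_pow_three_div_Δ_of_a₆_eq_zero {K : Type*} [Field K] {W : WeierstrassCurve K}
    [W.IsShortNF] (h₆ : W.a₆ = 0) (hΔ : W.Δ ≠ 0) : W.c₄ ^ 3 / W.Δ = 1728 := by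
  rw [div_eq_iff hΔ, c₄_of_isShortNF, Δ_of_isShortNF, h₆]
  ring

end WeierstrassCurve

section Curves

open WeierstrassCurve

variable {K : Type*} [Field K]

instance isShortNF_C91 (t d : K) : (C91 t d).IsShortNF := ⟨rfl, rfl, rfl⟩

instance isShortNF_C92 (t d : K) : (C92 t d).IsShortNF := ⟨rfl, rfl, rfl⟩

instance isShortNF_C93 (t d : K) : (C93 t d).IsShortNF := ⟨rfl, rfl, rfl⟩

theorem C91_a₄_eq_sq_mul (t d : K) : (C91 t d).a₄ = d ^ 2 * (C91 t 1).a₄ := by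
  simp only [C91]
  ring

theorem C91_a₆_eq_cube_mul (t d : K) : (C91 t d).a₆ = d ^ 3 * (C91 t 1).a₆ := by
  simp only [C91]
  ring

section SqEq

variable {t : K}

theorem three_add_two_mul_ne_zero_of_sq_eq [CharZero K] (ht : t ^ 2 = 6 * t + 18) :
    3 + 2 * t ≠ 0 :=
  add_mul_ne_zero_of_sq_eq ht (by norm_num)

theorem C91_a₄_of_sq_eq (ht : t ^ 2 = 6 * t + 18) :
    (C91 t 1).a₄ = -2 ^ 2 * 3 ^ 6 * (81 + 34 * t) := by
  simp only [C91]
  linear_combination (-10962 - 738 * t - 3 * t ^ 2) * ht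

theorem C91_a₆_of_sq_eq (ht : t ^ 2 = 6 * t + 18) :
    (C91 t 1).a₆ = 2 ^ 5 * 3 ^ 9 * 7 * (20 + 9 * t) := by
  simp only [C91]
  linear_combination
    (4734936 + 499176 * t + 39204 * t ^ 2 + 996 * t ^ 3 - 2 * t ^ 4) * ht

theorem C91_c₄_of_sq_eq (ht : t ^ 2 = 6 * t + 18) :
    (C91 t 1).c₄ = 2 ^ 6 * 3 ^ 7 * (81 + 34 * t) := by
  rw [c₄_of_isShortNF, C91_a₄_of_sq_eq ht]
  ring

theorem C91_Δ_of_sq_eq (ht : t ^ 2 = 6 * t + 18) :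
    (C91 t 1).Δ = 2 ^ 12 * 3 ^ 21 * (3 + 2 * t) := by
  rw [Δ_of_isShortNF, C91_a₄_of_sq_eq ht, C91_a₆_of_sq_eq ht]
  linear_combination (139771890364907520 + 62370508388990976 * t) * ht

theorem C91_Δ_ne_zero_of_sq_eq [CharZero K] (ht : t ^ 2 = 6 * t + 18) : (C91 t 1).Δ ≠ 0 := by
  rw [C91_Δ_of_sq_eq ht]
  exact mul_ne_zero (by norm_num) (three_add_two_mul_ne_zero_of_sq_eq ht)

theorem C91_c₄_pow_three_div_Δ_of_sq_eq [CharZero K] (ht : t ^ 2 = 6 * t + 18) :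
    (C91 t 1).c₄ ^ 3 / (C91 t 1).Δ = 14776832 * t + 32440512 := by
  rw [div_eq_iff (C91_Δ_ne_zero_of_sq_eq ht), C91_c₄_of_sq_eq ht, C91_Δ_of_sq_eq ht]
  linear_combination 2 ^ 18 * 3 ^ 21 * (54956 + 39304 * t) * ht

theorem C92_a₄_of_sq_eq (ht : t ^ 2 = 6 * t + 18) :
    (C92 t 1).a₄ = -2 ^ 2 * 3 ^ 9 * (3 + 2 * t) := by
  simp only [C92]
  linear_combination (-13122 - 1458 * t - 243 * t ^ 2) * ht

theorem C92_a₆_of_sq_eq (ht : t ^ 2 = 6 * t + 18) : (C92 t 1).a₆ = 0 := by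
  simp only [C92]
  linear_combination (-1458 * (t ^ 4 + 6 * t ^ 3 + 54 * t ^ 2 - 108 * t + 324)) * ht

theorem C92_Δ_ne_zero_of_sq_eq [CharZero K] (ht : t ^ 2 = 6 * t + 18) : (C92 t 1).Δ ≠ 0 := by
  have hΔ : (C92 t 1).Δ = 2 ^ 12 * 3 ^ 27 * (3 + 2 * t) ^ 3 := by
    rw [Δ_of_isShortNF, C92_a₄_of_sq_eq ht, C92_a₆_of_sq_eq ht]
    ring
  rw [hΔ]
  exact mul_ne_zero (by norm_num) (pow_ne_zero 3 (three_add_two_mul_ne_zero_of_sq_eq ht))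

theorem C93_eq_C91_of_sq_eq (ht : t ^ 2 = 6 * t + 18) : C93 t 1 = C91 t (-9) := by
  ext
  · rfl
  · rfl
  · rfl
  · simp only [C91, C93]
    linear_combination (-19440 * (t ^ 2 + 3 * t + 9)) * ht
  · simp only [C91, C93]
    linear_combination (-106760592 - 57001968 * t - 28815912 * t ^ 2 - 5651208 * t ^ 3
      - 1064340 * t ^ 4) * ht

end SqEq

end Curves

theorem stmt11 {K : Type*} [Field K] [CharZero K] (t : K) (ht : t ^ 2 = 6 * t + 18) :
    (C91 t 1).Δ ≠ 0 ∧ (C92 t 1).Δ ≠ 0 ∧ (C93 t 1).Δ ≠ 0 ∧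
    (C92 t 1).c₄ ^ 3 / (C92 t 1).Δ = 1728 ∧
    (C91 t 1).c₄ ^ 3 / (C91 t 1).Δ = 14776832 * t + 32440512 ∧
    (C93 t 1).c₄ ^ 3 / (C93 t 1).Δ = 14776832 * t + 32440512 := by
  have h₄ := C91_a₄_eq_sq_mul t (-9 : K)
  have h₆ := C91_a₆_eq_cube_mul t (-9 : K)
  have hΔ₃ : (C93 t 1).Δ ≠ 0 := by
    rw [C93_eq_C91_of_sq_eq ht, WeierstrassCurve.Δ_eq_of_twist h₄ h₆]
    exact mul_ne_zero (by norm_num) (C91_Δ_ne_zero_of_sq_eq ht)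
  refine ⟨C91_Δ_ne_zero_of_sq_eq ht, C92_Δ_ne_zero_of_sq_eq ht, hΔ₃,
    WeierstrassCurve.c₄_pow_three_div_Δ_of_a₆_eq_zero (C92_a₆_of_sq_eq ht)
      (C92_Δ_ne_zero_of_sq_eq ht),
    C91_c₄_pow_three_div_Δ_of_sq_eq ht, ?_⟩
  rw [C93_eq_C91_of_sq_eq ht,
    WeierstrassCurve.c₄_pow_three_div_Δ_eq_of_twist (by norm_num) h₄ h₆]
  exact C91_c₄_pow_three_div_Δ_of_sq_eq ht
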